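/- Let n ≥ 1 and let I = {(i,j) ∈ ℤ² : 0 ≤ i,j ≤ 4n-1, i even, i+j ≤ 4n-1}. The number of pairs (i,j) ∈ I such that there exists a distinct pair (i',j') ∈ I with i + 2nj = i' + 2nj' and j' = j + 1 equals n(n+1). Consequently, the image of I under the map (i,j) ↦ i + 2nj has cardinality exactly 2n(2n+1) - n(n+1) = n(3n+1). -/

import Mathlib

/-!
Write `key p = p.1 + 2n·p.2` and split the staircase `S` at `p.1 = 2n`. On the low part
`p.1 < 2n` the key is injective (it is base-`2n` division with remainder), while every point
of the high part collides with `(p.1 - 2n, p.2 + 1)`, which is low. Hence the colliding points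
are exactly the high ones and the image of `S` is the image of the low part. Both `#S` and the
size of the low part are sums `∑_{k<c} (4n - 2k) = c(4n + 1 - c)`, for `c = 2n` and `c = n`.
-/

open Finset

def evenStaircase (M : ℕ) : Finset (ℕ × ℕ) :=
  (range M ×ˢ range M).filter (fun p : ℕ × ℕ => Even p.1 ∧ p.1 + p.2 ≤ M - 1)

lemma mem_evenStaircase {M : ℕ} {p : ℕ × ℕ} :
    p ∈ evenStaircase M ↔ Even p.1 ∧ p.1 + p.2 < M := by
  simp only [evenStaircase, mem_filter, mem_product, mem_range]
  exact ⟨fun ⟨_, he, h⟩ => ⟨he, by omega⟩, fun ⟨he, h⟩ => ⟨by omega, he, by omega⟩⟩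

lemma sum_range_sub_two_mul {M c : ℕ} (h : 2 * c ≤ M) :
    ∑ k ∈ range c, (M - 2 * k) = c * (M + 1 - c) := by
  induction c with
  | zero => simp
  | succ c ih =>
    rw [sum_range_succ, ih (by omega)]
    zify [(by omega : c ≤ M + 1), (by omega : c + 1 ≤ M + 1), (by omega : 2 * c ≤ M)]
    ring

lemma card_filter_add_lt {s : Finset ℕ} (M : ℕ) :
    #{p ∈ s ×ˢ range M | p.1 + p.2 < M} = ∑ i ∈ s, (M - i) := by
  rw [card_filter, sum_product]
  refine sum_congr rfl fun i _ => ?_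
  rw [← card_filter, ← card_range (M - i)]
  congr 1
  ext j
  simp only [mem_filter, mem_range]
  omega

lemma card_evenStaircase_filter_fst_lt (M c : ℕ) (h : 2 * c ≤ M) :
    #{p ∈ evenStaircase M | p.1 < 2 * c} = c * (M + 1 - c) := by
  have hstrip : {p ∈ evenStaircase M | p.1 < 2 * c}
      = {p ∈ (range c).map ⟨(2 * ·), mul_right_injective₀ two_ne_zero⟩ ×ˢ range M |
          p.1 + p.2 < M} := by
    ext ⟨i, j⟩
    simp only [mem_filter, mem_evenStaircase, mem_product, mem_map, mem_range,
      Function.Embedding.coeFn_mk]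
    constructor
    · rintro ⟨⟨⟨k, rfl⟩, hij⟩, hi⟩
      exact ⟨⟨⟨k, by omega, by ring⟩, by omega⟩, hij⟩
    · rintro ⟨⟨⟨k, hk, rfl⟩, -⟩, hij⟩
      exact ⟨⟨even_two_mul k, hij⟩, by omega⟩
  rw [hstrip, card_filter_add_lt, sum_map]
  exact sum_range_sub_two_mul h

section Collisions

variable {n : ℕ}

lemma shift_mem_evenStaircase {p : ℕ × ℕ} (hp : p ∈ evenStaircase (4 * n)) (h : 2 * n ≤ p.1) :
    (p.1 - 2 * n, p.2 + 1) ∈ evenStaircase (4 * n) := by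
  rw [mem_evenStaircase] at hp ⊢
  exact ⟨hp.1.tsub (even_two_mul n), by omega⟩

lemma key_shift {p : ℕ × ℕ} (h : 2 * n ≤ p.1) :
    p.1 - 2 * n + 2 * n * (p.2 + 1) = p.1 + 2 * n * p.2 := by
  rw [mul_add, mul_one]
  omega

lemma exists_collision_iff {p : ℕ × ℕ} (hp : p ∈ evenStaircase (4 * n)) :
    (∃ q ∈ evenStaircase (4 * n), q ≠ p ∧
        p.1 + 2 * n * p.2 = q.1 + 2 * n * q.2 ∧ q.2 = p.2 + 1) ↔ 2 * n ≤ p.1 := by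
  constructor
  · rintro ⟨q, -, -, hkey, hq⟩
    rw [hq, mul_add, mul_one] at hkey
    omega
  · intro h
    refine ⟨_, shift_mem_evenStaircase hp h, ?_, (key_shift h).symm, rfl⟩
    simp [Prod.ext_iff]

lemma key_injOn_fst_lt :
    Set.InjOn (fun p : ℕ × ℕ => p.1 + 2 * n * p.2) {p | p.1 < 2 * n} := by
  intro p hp q hq hkey
  have hpos : 0 < 2 * n := by exact Nat.zero_lt_of_lt hp
  obtain ⟨hp2, hp1⟩ := (Nat.div_mod_unique hpos).2 ⟨hkey, hp⟩
  obtain ⟨hq2, hq1⟩ := (Nat.div_mod_unique hpos).2 ⟨rfl, hq⟩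
  exact Prod.ext (hp1.symm.trans hq1) (hp2.symm.trans hq2)

lemma image_key_evenStaircase :
    (evenStaircase (4 * n)).image (fun p : ℕ × ℕ => p.1 + 2 * n * p.2)
      = {p ∈ evenStaircase (4 * n) | p.1 < 2 * n}.image (fun p => p.1 + 2 * n * p.2) := by
  refine Subset.antisymm (fun v hv => ?_) (image_subset_image (filter_subset _ _))
  obtain ⟨p, hp, rfl⟩ := mem_image.1 hv
  by_cases hlow : p.1 < 2 * n
  · exact mem_image_of_mem _ (mem_filter.2 ⟨hp, hlow⟩)
  · have hp4 := (mem_evenStaircase.1 hp).2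
    exact mem_image.2 ⟨_, mem_filter.2 ⟨shift_mem_evenStaircase hp (by omega), by dsimp; omega⟩,
      key_shift (by omega)⟩

end Collisions

theorem stmt_9_general (n : ℕ)
    (S : Finset (ℕ × ℕ))
    (hS : S = (Finset.range (4 * n) ×ˢ Finset.range (4 * n)).filter
      (fun p : ℕ × ℕ => Even p.1 ∧ p.1 + p.2 ≤ 4 * n - 1)) :
    (S.filter (fun p : ℕ × ℕ => ∃ q ∈ S, q ≠ p ∧
        p.1 + 2 * n * p.2 = q.1 + 2 * n * q.2 ∧ q.2 = p.2 + 1)).card = n * (n + 1) ∧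
    (S.image (fun p : ℕ × ℕ => p.1 + 2 * n * p.2)).card
      = 2 * n * (2 * n + 1) - n * (n + 1) ∧
    2 * n * (2 * n + 1) - n * (n + 1) = n * (3 * n + 1) := by
  change S = evenStaircase (4 * n) at hS
  subst hS
  have hcard : #(evenStaircase (4 * n)) = 2 * n * (2 * n + 1) := by
    have hwhole := card_evenStaircase_filter_fst_lt (4 * n) (2 * n) (by omega)
    rwa [filter_true_of_mem fun p hp => by have := mem_evenStaircase.1 hp; omega,
      show 4 * n + 1 - 2 * n = 2 * n + 1 by omega] at hwhole
  have hlow := card_evenStaircase_filter_fst_lt (4 * n) n (by omega)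
  rw [show 4 * n + 1 - n = 3 * n + 1 by omega] at hlow
  have hsplit := card_filter_add_card_filter_not (s := evenStaircase (4 * n)) (2 * n ≤ ·.1)
  simp only [not_le] at hsplit
  have hcount : 2 * n * (2 * n + 1) = n * (3 * n + 1) + n * (n + 1) := by ring
  have hinj : Set.InjOn (fun p : ℕ × ℕ => p.1 + 2 * n * p.2)
      ↑{p ∈ evenStaircase (4 * n) | p.1 < 2 * n} :=
    key_injOn_fst_lt.mono fun p hp => (mem_filter.1 hp).2
  rw [filter_congr fun p hp => exists_collision_iff hp, image_key_evenStaircase,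
    card_image_of_injOn hinj]
  omega

/-- in the index set `I`, the number of pairs `(i,j)` colliding with a
distinct pair `(i',j')` (same value of `i + 2nj`, with `j' = j+1`) is `n(n+1)`, and
the image of `I` under `(i,j) ↦ i + 2nj` has cardinality `n(3n+1)`. -/
theorem stmt_9 (n : ℕ) (hn : 1 ≤ n)
    (S : Finset (ℕ × ℕ))
    (hS : S = (Finset.range (4 * n) ×ˢ Finset.range (4 * n)).filter
      (fun p : ℕ × ℕ => Even p.1 ∧ p.1 + p.2 ≤ 4 * n - 1)) :
    (S.filter (fun p : ℕ × ℕ => ∃ q ∈ S, q ≠ p ∧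
        p.1 + 2 * n * p.2 = q.1 + 2 * n * q.2 ∧ q.2 = p.2 + 1)).card = n * (n + 1) ∧
    (S.image (fun p : ℕ × ℕ => p.1 + 2 * n * p.2)).card
      = 2 * n * (2 * n + 1) - n * (n + 1) ∧
    2 * n * (2 * n + 1) - n * (n + 1) = n * (3 * n + 1) :=
  stmt_9_general n S hS
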